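/- For an odd prime p, the direct product of the extraspecial group of order p^3 and exponent p with a cyclic group of order p has automorphism group of order (p-1)(p^2-1)(p^2-p)p^5. -/

import Mathlib

/-!
For odd `p`, `E × C_p` is isomorphic to `HeisProd p`: a commutator `⁅x, y⁆ ≠ 1` of `E` is central
because `E ⧸ Z(E)` has order dividing `p ^ 2`, and the normal forms `⁅x, y⁆ ^ k * y ^ b * x ^ a`
identify `E` with the Heisenberg group mod `p`.
An automorphism of `HeisProd p` is determined by the images of `x`, `y` and of the generator `t`
of the cyclic factor. The images of `x` and `y` may be any elements whose first two coordinates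
form an invertible matrix `M` (`|GL₂(p)| · p ^ 4` choices), and that of `t` any central element
outside `⟨⁅x, y⁆⟩` (`p (p - 1)` choices): each choice is realised by
`(v, c, d) ↦ (v M, det M · c + λ v + s d, μ v + r d)`, since the commutator form gets multiplied
by `det M`.
-/

open Subgroup
open scoped commutatorElement

/-- `⟨a, b, c, d⟩` is the element `(a, b, c)` of the Heisenberg group, with product
`c + c' + (a b' - b a') / 2` in the central coordinate, times `d : ZMod p`. Halving the form makes
powers scalar multiples and the automorphisms linear in the coordinates. -/
@[ext] structure HeisProd (p : ℕ) where
  a : ZMod p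
  b : ZMod p
  c : ZMod p
  d : ZMod p

namespace HeisProd

variable {p : ℕ}

instance : Mul (HeisProd p) :=
  ⟨fun g h => ⟨g.a + h.a, g.b + h.b, g.c + h.c + (g.a * h.b - g.b * h.a) * 2⁻¹, g.d + h.d⟩⟩
instance : One (HeisProd p) := ⟨⟨0, 0, 0, 0⟩⟩
instance : Inv (HeisProd p) := ⟨fun g => ⟨-g.a, -g.b, -g.c, -g.d⟩⟩

@[simp] lemma mul_a (g h : HeisProd p) : (g * h).a = g.a + h.a := rfl
@[simp] lemma mul_b (g h : HeisProd p) : (g * h).b = g.b + h.b := rfl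
@[simp] lemma mul_c (g h : HeisProd p) :
    (g * h).c = g.c + h.c + (g.a * h.b - g.b * h.a) * 2⁻¹ := rfl
@[simp] lemma mul_d (g h : HeisProd p) : (g * h).d = g.d + h.d := rfl
@[simp] lemma one_a : (1 : HeisProd p).a = 0 := rfl
@[simp] lemma one_b : (1 : HeisProd p).b = 0 := rfl
@[simp] lemma one_c : (1 : HeisProd p).c = 0 := rfl
@[simp] lemma one_d : (1 : HeisProd p).d = 0 := rfl
@[simp] lemma inv_a (g : HeisProd p) : g⁻¹.a = -g.a := rfl
@[simp] lemma inv_b (g : HeisProd p) : g⁻¹.b = -g.b := rfl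
@[simp] lemma inv_c (g : HeisProd p) : g⁻¹.c = -g.c := rfl
@[simp] lemma inv_d (g : HeisProd p) : g⁻¹.d = -g.d := rfl

instance : Group (HeisProd p) where
  mul_assoc g h k := by ext <;> simp <;> ring
  one_mul g := by ext <;> simp
  mul_one g := by ext <;> simp
  inv_mul_cancel g := by ext <;> simp; ring

lemma pow_eq_mk (g : HeisProd p) (n : ℕ) :
    g ^ n = ⟨n * g.a, n * g.b, n * g.c, n * g.d⟩ := by
  induction n with
  | zero => ext <;> simp
  | succ n ih => rw [pow_succ, ih]; ext <;> simp <;> ring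

lemma commutatorElement_eq_mk [Fact p.Prime] (h2 : (2 : ZMod p) ≠ 0) (g h : HeisProd p) :
    (⁅g, h⁆ : HeisProd p) = ⟨0, 0, g.a * h.b - g.b * h.a, 0⟩ := by
  ext <;> simp [commutatorElement_def]
  field_simp
  ring

def equivProd : HeisProd p ≃ ZMod p × ZMod p × ZMod p × ZMod p where
  toFun g := (g.a, g.b, g.c, g.d)
  invFun q := ⟨q.1, q.2.1, q.2.2.1, q.2.2.2⟩

instance [NeZero p] : Finite (HeisProd p) := .of_equiv _ equivProd.symm

lemma card [NeZero p] : Nat.card (HeisProd p) = p ^ 4 := by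
  simp [Nat.card_congr equivProd]
  ring

def x : HeisProd p := ⟨1, 0, 0, 0⟩
def y : HeisProd p := ⟨0, 1, 0, 0⟩
def t : HeisProd p := ⟨0, 0, 0, 1⟩

lemma eq_mul_pow_gens [Fact p.Prime] (h2 : (2 : ZMod p) ≠ 0) (g : HeisProd p) :
    g = x ^ g.a.val * y ^ g.b.val * ⁅(x : HeisProd p), y⁆ ^ (g.c - g.a * g.b * 2⁻¹).val *
      t ^ g.d.val := by
  ext <;> simp [pow_eq_mk, commutatorElement_eq_mk h2, x, y, t]

lemma hom_ext [Fact p.Prime] (h2 : (2 : ZMod p) ≠ 0) {H : Type*} [Group H]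
    {f f' : HeisProd p →* H} (hx : f x = f' x) (hy : f y = f' y) (ht : f t = f' t) : f = f' := by
  ext g
  rw [eq_mul_pow_gens h2 g]
  simp only [map_mul, map_pow, map_commutatorElement, hx, hy, ht]

def endOfParams (M : Matrix (Fin 2) (Fin 2) (ZMod p)) (u v : ZMod p × ZMod p) (s r : ZMod p) :
    HeisProd p →* HeisProd p where
  toFun g := ⟨g.a * M 0 0 + g.b * M 1 0, g.a * M 0 1 + g.b * M 1 1,
    M.det * g.c + g.a * u.1 + g.b * u.2 + g.d * s, g.a * v.1 + g.b * v.2 + g.d * r⟩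
  map_one' := by ext <;> simp
  map_mul' g h := by ext <;> simp [Matrix.det_fin_two] <;> ring

section

variable (M : Matrix (Fin 2) (Fin 2) (ZMod p)) (u v : ZMod p × ZMod p) (s r : ZMod p)

@[simp] lemma endOfParams_x : endOfParams M u v s r x = ⟨M 0 0, M 0 1, u.1, v.1⟩ := by
  ext <;> simp [endOfParams, x]

@[simp] lemma endOfParams_y : endOfParams M u v s r y = ⟨M 1 0, M 1 1, u.2, v.2⟩ := by
  ext <;> simp [endOfParams, y]

@[simp] lemma endOfParams_t : endOfParams M u v s r t = ⟨0, 0, s, r⟩ := by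
  ext <;> simp [endOfParams, t]

end

lemma endOfParams_injective [Fact p.Prime] {M : Matrix (Fin 2) (Fin 2) (ZMod p)}
    (hM : M.det ≠ 0) (u v : ZMod p × ZMod p) (s : ZMod p) {r : ZMod p} (hr : r ≠ 0) :
    Function.Injective (endOfParams M u v s r) := by
  rw [injective_iff_map_eq_one]
  intro g hg
  simp only [endOfParams, MonoidHom.coe_mk, OneHom.coe_mk, HeisProd.ext_iff, one_a, one_b, one_c,
    one_d] at hg
  obtain ⟨ha, hb, hc, hd⟩ := hg
  have hab : ![g.a, g.b] = 0 := Matrix.eq_zero_of_vecMul_eq_zero hM <| by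
    ext i; fin_cases i <;> simp [Matrix.vecMul, dotProduct, Fin.sum_univ_two, ha, hb]
  have ha0 : g.a = 0 := congrFun hab 0
  have hb0 : g.b = 0 := congrFun hab 1
  have hd0 : g.d = 0 := by simpa [ha0, hb0, hr] using hd
  have hc0 : g.c = 0 := by simpa [ha0, hb0, hd0, hM] using hc
  ext <;> assumption

abbrev AutParams (p : ℕ) :=
  GL (Fin 2) (ZMod p) × (ZMod p × ZMod p) × (ZMod p × ZMod p) × ZMod p × (ZMod p)ˣ

variable [Fact p.Prime]

noncomputable def autOfParams (P : AutParams p) : MulAut (HeisProd p) :=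
  MulEquiv.ofBijective (endOfParams P.1 P.2.1 P.2.2.1 P.2.2.2.1 P.2.2.2.2) <|
    Finite.injective_iff_bijective.mp <|
      endOfParams_injective P.1.det_ne_zero _ _ _ P.2.2.2.2.ne_zero

lemma autOfParams_apply (P : AutParams p) (g : HeisProd p) :
    autOfParams P g = endOfParams P.1 P.2.1 P.2.2.1 P.2.2.2.1 P.2.2.2.2 g := rfl

lemma autOfParams_injective : Function.Injective (autOfParams (p := p)) := by
  rintro ⟨M, u, v, s, r⟩ ⟨M', u', v', s', r'⟩ h
  have hx := DFunLike.congr_fun h x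
  have hy := DFunLike.congr_fun h y
  have ht := DFunLike.congr_fun h t
  simp only [autOfParams_apply, endOfParams_x, endOfParams_y, endOfParams_t, HeisProd.mk.injEq]
    at hx hy ht
  obtain ⟨h00, h01, hu1, hv1⟩ := hx
  obtain ⟨h10, h11, hu2, hv2⟩ := hy
  obtain ⟨-, -, hs, hr⟩ := ht
  have hM : M = M' :=
    Units.ext <| Matrix.ext fun i j => by fin_cases i <;> fin_cases j <;> assumption
  rw [hM, Prod.ext hu1 hu2, Prod.ext hv1 hv2, hs, Units.ext hr]

lemma autOfParams_surjective (h2 : (2 : ZMod p) ≠ 0) :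
    Function.Surjective (autOfParams (p := p)) := by
  intro ψ
  set A := ψ x
  set B := ψ y
  set C := ψ t
  have hψw : ψ ⁅(x : HeisProd p), y⁆ = ⟨0, 0, A.a * B.b - A.b * B.a, 0⟩ := by
    rw [map_commutatorElement, commutatorElement_eq_mk h2]
  have hdet : A.a * B.b - A.b * B.a ≠ 0 := by
    intro h0
    have h := congrArg HeisProd.c <| ψ.injective <|
      (hψw.trans (by rw [h0]; rfl)).trans ψ.map_one.symm
    simp [commutatorElement_eq_mk h2, x, y] at h
  have hC (g : HeisProd p) : ⁅C, g⁆ = 1 := by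
    rw [← ψ.apply_symm_apply g, ← map_commutatorElement, commutatorElement_eq_mk h2]
    simp [t]
    rfl
  have hCa : C.a = 0 := by simpa [commutatorElement_eq_mk h2, y] using congrArg HeisProd.c (hC y)
  have hCb : C.b = 0 := by simpa [commutatorElement_eq_mk h2, x] using congrArg HeisProd.c (hC x)
  have hCd : C.d ≠ 0 := by
    intro h0
    have h : ψ (⁅(x : HeisProd p), y⁆ ^ (C.c / (A.a * B.b - A.b * B.a)).val) = ψ t := by
      rw [map_pow, hψw, pow_eq_mk]
      ext <;> simp [hCa, hCb, h0, C, hdet]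
    have := congrArg HeisProd.d (ψ.injective h)
    simp [pow_eq_mk, commutatorElement_eq_mk h2, t] at this
  refine ⟨(.mkOfDetNeZero !![A.a, A.b; B.a, B.b] (by rwa [Matrix.det_fin_two_of]),
    (A.c, B.c), (A.d, B.d), C.c, .mk0 C.d hCd), MulEquiv.toMonoidHom_injective ?_⟩
  apply hom_ext h2 <;> ext <;> simp [autOfParams_apply, A, B, C, hCa, hCb]

lemma card_mulAut (h2 : (2 : ZMod p) ≠ 0) :
    Nat.card (MulAut (HeisProd p)) = (p ^ 2 - 1) * (p ^ 2 - p) * p ^ 5 * (p - 1) := by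
  rw [← Nat.card_congr (.ofBijective _ ⟨autOfParams_injective, autOfParams_surjective h2⟩)]
  simp only [Nat.card_prod, Matrix.card_GL_field, Fin.prod_univ_two, Nat.card_zmod,
    Nat.card_eq_fintype_card (α := (ZMod p)ˣ), ZMod.card_units, ZMod.card, Fin.val_zero,
    Fin.val_one, pow_zero, pow_one]
  ring

end HeisProd

section

variable {G : Type*} [Group G] {x y : G}

lemma conj_pow_eq_of_commutatorElement_mem_center (hw : ⁅x, y⁆ ∈ center G) (a : ℕ) :
    x ^ a * y * (x ^ a)⁻¹ = ⁅x, y⁆ ^ a * y := by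
  induction a with
  | zero => simp
  | succ a ih =>
    calc x ^ (a + 1) * y * (x ^ (a + 1))⁻¹ = x * (x ^ a * y * (x ^ a)⁻¹) * x⁻¹ := by group
      _ = ⁅x, y⁆ ^ a * (x * y * x⁻¹) := by
        rw [ih, ← mul_assoc, (mem_center_iff.mp (pow_mem hw a)) x]
        group
      _ = ⁅x, y⁆ ^ (a + 1) * y := by
        rw [pow_succ, mul_assoc, commutatorElement_def]
        group

lemma pow_mul_pow_eq_of_commutatorElement_mem_center (hw : ⁅x, y⁆ ∈ center G) (a b : ℕ) :
    x ^ a * y ^ b = ⁅x, y⁆ ^ (a * b) * (y ^ b * x ^ a) := by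
  have hwy : Commute (⁅x, y⁆ ^ a) y := ((mem_center_iff.mp (pow_mem hw a)) y).symm
  calc x ^ a * y ^ b = (x ^ a * y * (x ^ a)⁻¹) ^ b * x ^ a := by rw [conj_pow]; group
    _ = ⁅x, y⁆ ^ (a * b) * (y ^ b * x ^ a) := by
      rw [conj_pow_eq_of_commutatorElement_mem_center hw, hwy.mul_pow, pow_mul, mul_assoc]

lemma normalForm_mul_of_commutatorElement_mem_center (hw : ⁅x, y⁆ ∈ center G)
    (a b c a' b' c' : ℕ) :
    ⁅x, y⁆ ^ c * (y ^ b * x ^ a) * (⁅x, y⁆ ^ c' * (y ^ b' * x ^ a')) =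
      ⁅x, y⁆ ^ (c + c' + a * b') * (y ^ (b + b') * x ^ (a + a')) := by
  have hc (n : ℕ) (g : G) : Commute (⁅x, y⁆ ^ n) g := ((mem_center_iff.mp (pow_mem hw n)) g).symm
  calc ⁅x, y⁆ ^ c * (y ^ b * x ^ a) * (⁅x, y⁆ ^ c' * (y ^ b' * x ^ a'))
      = ⁅x, y⁆ ^ c * ⁅x, y⁆ ^ c' * (y ^ b * (x ^ a * y ^ b') * x ^ a') := by
        rw [mul_assoc, (hc c' _).symm.left_comm]
        group
    _ = ⁅x, y⁆ ^ c * ⁅x, y⁆ ^ c' * ⁅x, y⁆ ^ (a * b') * (y ^ b * y ^ b' * (x ^ a * x ^ a')) := by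
        rw [pow_mul_pow_eq_of_commutatorElement_mem_center hw, (hc _ _).symm.left_comm]
        group
    _ = _ := by rw [← pow_add, ← pow_add, ← pow_add, ← pow_add]

variable {p : ℕ} [Fact p.Prime]

lemma isMulCommutative_of_card_dvd_prime_sq (h : Nat.card G ∣ p ^ 2) : IsMulCommutative G := by
  obtain ⟨k, hk, hG⟩ := (Nat.dvd_prime_pow Fact.out).mp h
  by_cases hk2 : k = 2
  · exact IsPGroup.isMulCommutative_of_card_eq_prime_sq (hk2 ▸ hG)
  · have : IsCyclic G := isCyclic_of_card_dvd_prime (p := p) <| by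
      simpa [hG] using pow_dvd_pow p (show k ≤ 1 by omega)
    infer_instance

lemma commutatorElement_mem_center_of_card_eq_prime_pow_three (hG : Nat.card G = p ^ 3)
    (x y : G) : ⁅x, y⁆ ∈ center G := by
  obtain ⟨k, hk, hZ⟩ := IsPGroup.card_center_eq_prime_pow hG (by norm_num)
  have : IsMulCommutative (G ⧸ center G) := isMulCommutative_of_card_dvd_prime_sq (p := p) <| by
    rw [← mul_dvd_mul_iff_left (NeZero.ne p), ← pow_succ', ← hG, ← (center G).card_mul_index]
    exact mul_dvd_mul_right (hZ ▸ dvd_pow_self p hk.ne') _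
  rw [← QuotientGroup.eq_one_iff, ← QuotientGroup.mk'_apply, map_commutatorElement,
    commutatorElement_eq_one_iff_mul_comm]
  exact IsMulCommutative.is_comm.comm _ _

lemma pow_eq_pow_of_natCast_eq {g : G} (hg : g ^ p = 1) {m n : ℕ} (h : (m : ZMod p) = n) :
    g ^ m = g ^ n := by
  rw [pow_eq_pow_mod m hg, pow_eq_pow_mod n hg, (ZMod.natCast_eq_natCast_iff' _ _ _).mp h]

end

namespace HeisProd

variable {p : ℕ} [Fact p.Prime] {G : Type*} [Group G] {x y : G}

/-- The correction `a * b / 2` in the exponent of `⁅x, y⁆` comes from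
`y ^ b * x ^ a = ⟨a, b, -a * b / 2, 0⟩` in `HeisProd p`. -/
def lift (h2 : (2 : ZMod p) ≠ 0) (hexp : ∀ g : G, g ^ p = 1) (hw : ⁅x, y⁆ ∈ center G) :
    HeisProd p →* G × Multiplicative (ZMod p) where
  toFun g := (⁅x, y⁆ ^ (g.c + g.a * g.b * 2⁻¹).val * (y ^ g.b.val * x ^ g.a.val), .ofAdd g.d)
  map_one' := by simp
  map_mul' g h := by
    refine Prod.ext ?_ rfl
    simp only [Prod.fst_mul, normalForm_mul_of_commutatorElement_mem_center hw, mul_a, mul_b,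
      mul_c]
    refine congr_arg₂ (· * ·) ?_ (congr_arg₂ (· * ·) ?_ ?_) <;>
      apply pow_eq_pow_of_natCast_eq (hexp _) <;> push_cast [ZMod.natCast_zmod_val]
    · field_simp
      ring
    · rfl
    · rfl

lemma lift_bijective (h2 : (2 : ZMod p) ≠ 0) (hexp : ∀ g : G, g ^ p = 1)
    (hw : ⁅x, y⁆ ∈ center G) (hw1 : ⁅x, y⁆ ≠ 1) (hG : Nat.card G = p ^ 3) :
    Function.Bijective (lift h2 hexp hw) := by
  have : Finite G := Nat.finite_of_card_ne_zero (by simp [hG, (Fact.out : p.Prime).ne_zero])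
  refine (Nat.bijective_iff_injective_and_card _).mpr ⟨?_, ?_⟩
  · have hcentral (c : ZMod p) (hc : lift h2 hexp hw ⟨0, 0, c, 0⟩ = 1) : c = 0 := by
      have hpow : ⁅x, y⁆ ^ c.val = 1 := by simpa [lift] using congrArg Prod.fst hc
      rwa [← orderOf_dvd_iff_pow_eq_one, orderOf_eq_prime (hexp _) hw1,
        ← ZMod.natCast_eq_zero_iff, ZMod.natCast_zmod_val] at hpow
    rw [injective_iff_map_eq_one]
    intro g hg
    have hcomm (h : HeisProd p) : g.a * h.b - g.b * h.a = 0 := by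
      refine hcentral _ ?_
      rw [← commutatorElement_eq_mk h2, map_commutatorElement, hg, commutatorElement_one_left]
    have ha : g.a = 0 := by simpa [HeisProd.y] using hcomm HeisProd.y
    have hb : g.b = 0 := by simpa [HeisProd.x] using hcomm HeisProd.x
    have hd : g.d = 0 := by simpa [lift] using congrArg Prod.snd hg
    have hc : g.c = 0 := hcentral _ <| by
      rw [← hg]
      congr 1
      ext <;> simp [ha, hb, hd]
    ext <;> assumption
  · rw [card, Nat.card_prod, hG, Nat.card_congr Multiplicative.toAdd, Nat.card_zmod]
    ring

end HeisProd

/-- The direct product of the extraspecial group of order p^3 and exponent p with a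
cyclic group of order p has automorphism group of order (p-1)(p^2-1)(p^2-p)p^5. -/
theorem stmt_3 (p : ℕ) [Fact p.Prime] (hp : Odd p)
    (E : Type*) [Group E]
    (hcard : Nat.card E = p ^ 3)
    (hexp : Monoid.exponent E = p)
    (hnab : ¬ ∀ a b : E, a * b = b * a) :
    (Nat.card (MulAut (E × Multiplicative (ZMod p))) : ℤ) =
      (p - 1) * (p ^ 2 - 1) * (p ^ 2 - p) * p ^ 5 := by
  have h2 : (2 : ZMod p) ≠ 0 := Ring.two_ne_zero <| by
    rw [ZMod.ringChar_zmod_n]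
    rintro rfl
    exact absurd hp (by decide)
  obtain ⟨x, y, hxy⟩ : ∃ x y : E, ⁅x, y⁆ ≠ 1 := by
    simpa [commutatorElement_eq_one_iff_mul_comm] using hnab
  have hexp' (g : E) : g ^ p = 1 := hexp ▸ Monoid.pow_exponent_eq_one g
  have hw := commutatorElement_mem_center_of_card_eq_prime_pow_three hcard x y
  let e := MulEquiv.ofBijective _ (HeisProd.lift_bijective h2 hexp' hw hxy hcard)
  rw [← Nat.card_congr (MulAut.congr e).toEquiv, HeisProd.card_mulAut h2]
  have hp1 : 1 ≤ p := (Fact.out : p.Prime).one_le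
  push_cast [Nat.cast_sub hp1, Nat.cast_sub (Nat.one_le_pow 2 p hp1),
    Nat.cast_sub (Nat.le_self_pow two_ne_zero p)]
  ring
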